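/- arXiv:1409.8085 — 2 statements merged into one kernel-verified Lean document; each statement's English description precedes it below -/
import Mathlib

section
/- Let α be a real symmetric positive definite 2s×2s matrix. Then the matrix A = Δ⁻¹α, regarded as a complex 2s×2s matrix, is diagonalizable over ℂ and its eigenvalues are ±iα₁, …, ±iα_s for some positive real numbers α₁, …, α_s; in particular every eigenvalue of Δ⁻¹α is purely imaginary and nonzero. -/
/-!
Write `α = T²` with `T = √α` symmetric and invertible. Then `Δ⁻¹α = (Δ⁻¹T)T` is conjugate to
`B = TΔ⁻¹T`, which is real, skew-symmetric and invertible, so `H = -iB` is Hermitian: it is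
unitarily diagonalizable with real nonzero eigenvalues. Since `Hᵀ = -H` and a matrix has the same
characteristic polynomial as its transpose, the eigenvalue multiset of `H` is symmetric under
negation, hence consists of pairs `±aⱼ` with `aⱼ > 0`. Reordering the eigenbasis, `B = iH` is
conjugate to `diag(±i aⱼ)`.
-/

open Matrix

/-- The standard symplectic matrix `Δ` of a system of `s` modes: block-diagonal
with `s` copies of the 2×2 block `[[0,1],[-1,0]]`. -/
noncomputable def Sympl (s : ℕ) : Matrix (Fin 2 × Fin s) (Fin 2 × Fin s) ℝ :=
  Matrix.blockDiagonal (fun _ => !![0, 1; -1, 0])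

open Finset (univ mem_univ_val)
open scoped MatrixOrder

theorem Multiset.exists_fin_map_univ_eq {α : Type*} {m : Multiset α} {n : ℕ}
    (h : Multiset.card m = n) : ∃ a : Fin n → α, univ.val.map a = m := by
  obtain rfl : m.toList.length = n := by simp [h]
  exact ⟨m.toList.get, by rw [Fin.univ_val_map, List.ofFn_get, Multiset.coe_toList]⟩

theorem Multiset.exists_pos_add_map_neg_eq {G : Type*} [AddCommGroup G] [LinearOrder G]
    [IsOrderedAddMonoid G] {m : Multiset G} {s : ℕ} (hcard : Multiset.card m = 2 * s)
    (hneg : m.map Neg.neg = m) (h0 : (0 : G) ∉ m) :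
    ∃ a : Fin s → G, (∀ j, 0 < a j) ∧ univ.val.map a + univ.val.map (-a) = m := by
  set pos := m.filter (0 < ·)
  have hsplit : pos + pos.map Neg.neg = m := by
    have hnonpos : m.filter (fun x => ¬ 0 < x) = pos.map Neg.neg := by
      calc m.filter (fun x => ¬ 0 < x) = (m.map Neg.neg).filter (· < 0) := by
            rw [hneg]
            exact Multiset.filter_congr fun x hx => by
              rw [not_lt, le_iff_lt_or_eq, or_iff_left (ne_of_mem_of_not_mem hx h0)]
        _ = pos.map Neg.neg := by simp [pos, Multiset.filter_map]
    rw [← hnonpos, Multiset.filter_add_not]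
  have hpos : Multiset.card pos = s := by
    have := congrArg Multiset.card hsplit
    rw [Multiset.card_add, Multiset.card_map] at this
    omega
  obtain ⟨a, ha⟩ := Multiset.exists_fin_map_univ_eq hpos
  refine ⟨a, fun j => ?_, ?_⟩
  · exact Multiset.of_mem_filter (ha ▸ Multiset.mem_map_of_mem a (mem_univ_val j))
  · rw [← hsplit, ← ha, Multiset.map_map]
    rfl

theorem Finset.univ_val_map_fin_two_prod {ι β : Type*} [Fintype ι] (f : Fin 2 × ι → β) :
    univ.val.map f = univ.val.map (fun j => f (0, j)) + univ.val.map (fun j => f (1, j)) := by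
  rw [← Finset.univ_product_univ, Finset.product_val]
  unfold SProd.sprod Multiset.instSProd Multiset.product
  simp [Multiset.bind, Multiset.join]

theorem exists_perm_comp_eq_of_map_univ_eq {ι β : Type*} [Fintype ι] [DecidableEq β]
    {f g : ι → β} (h : univ.val.map f = univ.val.map g) :
    ∃ σ : Equiv.Perm ι, g ∘ σ = f := by
  classical
  have hfiber : ∀ c, Fintype.card {i // f i = c} = Fintype.card {i // g i = c} := fun c => by
    simpa [Multiset.count_map, Fintype.card_subtype, Finset.card_def, Finset.filter_val, eq_comm]
      using congrArg (Multiset.count c) h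
  exact ⟨Equiv.ofFiberEquiv fun c => Fintype.equivOfCardEq (hfiber c),
    funext (Equiv.ofFiberEquiv_map _)⟩

theorem IsConj.smul {α M : Type*} [Monoid α] [SMul M α] [SMulCommClass M α α]
    [IsScalarTower M α α] {a b : α} (h : IsConj a b) (r : M) : IsConj (r • a) (r • b) :=
  let ⟨c, hc⟩ := h; ⟨c, hc.smul_right r⟩

theorem isConj_mul_comm_of_isUnit {α : Type*} [Monoid α] (a : α) {u : α} (hu : IsUnit u) :
    IsConj (a * u) (u * a) :=
  ⟨hu.unit, (mul_assoc _ _ _).symm⟩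

namespace Matrix

theorem transpose_map_ofReal_eq_neg {n : Type*} {B : Matrix n n ℝ} (hBT : Bᵀ = -B) :
    (B.map ((↑) : ℝ → ℂ))ᵀ = -B.map ((↑) : ℝ → ℂ) := by
  rw [← transpose_map, hBT, Matrix.map_neg _ Complex.ofReal_neg]

theorem isHermitian_neg_I_smul_map_ofReal {n : Type*} {B : Matrix n n ℝ} (hBT : Bᵀ = -B) :
    (-Complex.I • B.map ((↑) : ℝ → ℂ)).IsHermitian := by
  have hBH : (B.map ((↑) : ℝ → ℂ))ᴴ = -B.map ((↑) : ℝ → ℂ) := by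
    rw [← transpose_map_ofReal_eq_neg hBT, conjTranspose, transpose_map, Matrix.map_map]
    simp [Function.comp_def, Complex.conj_ofReal]
  simp [IsHermitian, conjTranspose_smul, hBH]

variable {n : Type*} [Fintype n] [DecidableEq n]

theorem _root_.IsConj.matrix_map {R S : Type*} [Semiring R] [Semiring S] (f : R →+* S)
    {A B : Matrix n n R} (h : IsConj A B) : IsConj (A.map f) (B.map f) :=
  f.mapMatrix.toMonoidHom.map_isConj h

theorem isConj_diagonal_comp_perm {R : Type*} [Semiring R] (d : n → R) (σ : Equiv.Perm n) :
    IsConj (diagonal d) (diagonal (d ∘ σ)) := by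
  refine ⟨permMatrixHom.toHomUnits σ⁻¹, ?_⟩
  ext i j
  simp only [MonoidHom.coe_toHomUnits, permMatrixHom_apply, inv_inv, Equiv.Perm.permMatrix,
    PEquiv.toMatrix_toPEquiv_mul, PEquiv.mul_toMatrix_toPEquiv, submatrix_apply, diagonal_apply]
  aesop

theorem exists_eq_mul_mul_inv_of_isConj {R : Type*} [CommRing R] {D M : Matrix n n R}
    (h : IsConj D M) : ∃ P : Matrix n n R, IsUnit P.det ∧ M = P * D * P⁻¹ := by
  obtain ⟨u, hu⟩ := h
  exact ⟨u, isUnits_det_units u, by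
    rw [← coe_units_inv, Units.eq_mul_inv_iff_mul_eq, hu.eq]⟩

namespace IsHermitian

variable {𝕜 : Type*} [RCLike 𝕜] {A : Matrix n n 𝕜}

theorem isConj_diagonal_eigenvalues (hA : A.IsHermitian) :
    IsConj A (diagonal (RCLike.ofReal ∘ hA.eigenvalues)) := by
  refine IsConj.symm ⟨Unitary.toUnits hA.eigenvectorUnitary, ?_⟩
  conv_rhs => rw [hA.spectral_theorem]
  simp [SemiconjBy, mul_assoc]

theorem isConj_diagonal_of_map_univ_eq (hA : A.IsHermitian) {f : n → ℝ}
    (h : univ.val.map f = univ.val.map hA.eigenvalues) :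
    IsConj A (diagonal (RCLike.ofReal ∘ f)) := by
  obtain ⟨σ, rfl⟩ := exists_perm_comp_eq_of_map_univ_eq h
  exact hA.isConj_diagonal_eigenvalues.trans (isConj_diagonal_comp_perm _ σ)

theorem charpoly_neg (hA : A.IsHermitian) :
    (-A).charpoly = ∏ i, (Polynomial.X - Polynomial.C (-hA.eigenvalues i : 𝕜)) := by
  conv_lhs => rw [hA.spectral_theorem, ← map_neg, diagonal_neg, Unitary.conjStarAlgAut_apply,
    charpoly_mul_comm, ← mul_assoc]
  simp [charpoly_diagonal]

theorem map_neg_eigenvalues_of_transpose_eq_neg (hA : A.IsHermitian) (hAT : Aᵀ = -A) :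
    (univ.val.map hA.eigenvalues).map Neg.neg = univ.val.map hA.eigenvalues := by
  apply Multiset.map_injective (RCLike.ofReal_injective (K := 𝕜))
  calc _ = (-A).charpoly.roots := by
        rw [hA.charpoly_neg, Polynomial.roots_prod _ _ (Finset.prod_ne_zero_iff.mpr
          fun i _ => Polynomial.X_sub_C_ne_zero _)]
        simp [Multiset.map_map]
    _ = A.charpoly.roots := by rw [← hAT, charpoly_transpose]
    _ = _ := by rw [hA.roots_charpoly_eq_eigenvalues, Multiset.map_map]

theorem eigenvalues_ne_zero (hA : A.IsHermitian) (h : A.det ≠ 0) (i : n) :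
    hA.eigenvalues i ≠ 0 := by
  rintro hi
  rw [hA.det_eq_prod_eigenvalues, Finset.prod_eq_zero (Finset.mem_univ i) (by simp [hi])] at h
  exact h rfl

end IsHermitian

theorem exists_pos_isConj_diagonal_of_transpose_eq_neg {s : ℕ}
    {B : Matrix (Fin 2 × Fin s) (Fin 2 × Fin s) ℝ} (hBT : Bᵀ = -B) (hB : B.det ≠ 0) :
    ∃ a : Fin s → ℝ, (∀ j, 0 < a j) ∧ IsConj (B.map ((↑) : ℝ → ℂ))
      (diagonal fun p => (if p.1 = 0 then Complex.I else -Complex.I) * (a p.2 : ℂ)) := by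
  set H := -Complex.I • B.map ((↑) : ℝ → ℂ)
  have hH : H.IsHermitian := isHermitian_neg_I_smul_map_ofReal hBT
  have hHT : Hᵀ = -H := by simp [H, transpose_map_ofReal_eq_neg hBT]
  have hHdet : H.det ≠ 0 := by
    have hdet : (B.map ((↑) : ℝ → ℂ)).det = B.det := (Complex.ofRealHom.map_det B).symm
    rw [det_smul, hdet]
    simp [hB]
  obtain ⟨a, ha, hsplit⟩ :=
    Multiset.exists_pos_add_map_neg_eq (m := univ.val.map hH.eigenvalues) (s := s) (by simp)
      (hH.map_neg_eigenvalues_of_transpose_eq_neg hHT) fun h0 =>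
      let ⟨i, _, hi⟩ := Multiset.mem_map.mp h0; hH.eigenvalues_ne_zero hHdet i hi
  set g : Fin 2 × Fin s → ℝ := fun p => if p.1 = 0 then a p.2 else -a p.2
  have hg : univ.val.map g = univ.val.map hH.eigenvalues := by
    rw [Finset.univ_val_map_fin_two_prod, ← hsplit]
    rfl
  refine ⟨a, ha, ?_⟩
  convert (hH.isConj_diagonal_of_map_univ_eq hg).smul Complex.I using 1
  · simp [H, smul_smul]
  · ext p q
    by_cases hpq : p = q
    · subst hpq
      by_cases hp : p.1 = 0 <;> simp [g, hp]
    · simp [hpq]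

end Matrix

theorem sympl_transpose (s : ℕ) : (Sympl s)ᵀ = -Sympl s := by
  have h : (!![0, 1; -1, 0] : Matrix (Fin 2) (Fin 2) ℝ)ᵀ = -!![0, 1; -1, 0] := by
    ext i j; fin_cases i <;> fin_cases j <;> simp
  rw [Sympl, blockDiagonal_transpose, ← blockDiagonal_neg]
  simp only [h, Pi.neg_def]

theorem sympl_mul_self (s : ℕ) : Sympl s * Sympl s = -1 := by
  have h : (!![0, 1; -1, 0] : Matrix (Fin 2) (Fin 2) ℝ) * !![0, 1; -1, 0] = -1 := by
    ext i j; fin_cases i <;> fin_cases j <;> simp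
  rw [Sympl, ← blockDiagonal_mul, ← blockDiagonal_one, ← blockDiagonal_neg]
  simp only [h, Pi.neg_def, Pi.one_def]

theorem isUnit_sympl (s : ℕ) : IsUnit (Sympl s) :=
  ⟨⟨Sympl s, -Sympl s, by simp [sympl_mul_self], by simp [sympl_mul_self]⟩, rfl⟩

theorem inv_sympl (s : ℕ) : (Sympl s)⁻¹ = -Sympl s :=
  inv_eq_left_inv (by rw [neg_mul, sympl_mul_self, neg_neg])

/-- For a real symmetric positive definite matrix `α`, the matrix
`A = Δ⁻¹α`, regarded as a complex matrix, is diagonalizable over `ℂ` with eigenvalues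
`±iα₁, …, ±iα_s` for some positive reals `α_j`; in particular all its eigenvalues are
purely imaginary and nonzero. -/
theorem inv_sympl_mul_posDef_diagonalizable (s : ℕ)
    (α : Matrix (Fin 2 × Fin s) (Fin 2 × Fin s) ℝ) (hα : α.PosDef) :
    ∃ a : Fin s → ℝ, (∀ j, 0 < a j) ∧
      ∃ P : Matrix (Fin 2 × Fin s) (Fin 2 × Fin s) ℂ, IsUnit P.det ∧
        ((Sympl s)⁻¹ * α).map (fun x : ℝ => (x : ℂ)) =
          P * Matrix.diagonal
            (fun p => (if p.1 = 0 then Complex.I else -Complex.I) * (a p.2 : ℂ)) * P⁻¹ := by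
  set T := CFC.sqrt α
  have hTT : T * T = α := CFC.sqrt_mul_sqrt_self α hα.posSemidef.nonneg
  have hTsymm : Tᵀ = T := by
    simpa [IsHermitian, conjTranspose_eq_transpose_of_trivial] using
      (CFC.sqrt_nonneg α).posSemidef.1
  have hT : IsUnit T := isUnit_of_mul_isUnit_left (hTT ▸ hα.isUnit)
  set B := T * -Sympl s * T
  have hBT : Bᵀ = -B := by simp [B, transpose_mul, hTsymm, sympl_transpose, mul_assoc]
  have hB : B.det ≠ 0 :=
    ((isUnit_iff_isUnit_det B).mp ((hT.mul (isUnit_sympl s).neg).mul hT)).ne_zero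
  obtain ⟨a, ha, hconj⟩ := exists_pos_isConj_diagonal_of_transpose_eq_neg hBT hB
  refine ⟨a, ha, exists_eq_mul_mul_inv_of_isConj (IsConj.symm ?_)⟩
  have hreal : IsConj ((Sympl s)⁻¹ * α) B := by
    rw [inv_sympl, ← hTT]
    simpa only [B, mul_assoc] using isConj_mul_comm_of_isUnit (-Sympl s * T) hT
  exact (hreal.matrix_map Complex.ofRealHom).trans hconj
end

section
/- Let K be a real 2×2 matrix with det K < 0, and let J_B be a complex structure on (ℝ², Δ). Then J_A = −K J_B K⁻¹ is a complex structure on (ℝ², Δ) satisfying the anticommutation relation K J_B + J_A K = 0; in particular, every nondegenerate single-mode Gaussian channel with negative det K is gauge-contravariant. -/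
open Matrix

/-- The single-mode symplectic matrix `Δ = [[0,1],[-1,0]]`. -/
def Sympl1 : Matrix (Fin 2) (Fin 2) ℝ := !![0, 1; -1, 0]

/-- A real 2×2 matrix `J` is a complex structure with respect to `Δ` if
`J² = -I`, `ΔJ = -JᵀΔ`, and `ΔJ` is positive semidefinite. -/
def IsComplexStructure1 (J : Matrix (Fin 2) (Fin 2) ℝ) : Prop :=
  J * J = -1 ∧ Sympl1 * J = -(Jᵀ * Sympl1) ∧ (Sympl1 * J).PosSemidef

/-! Every real 2×2 matrix satisfies `Kᵀ Δ K = (det K) Δ`, hence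
`Δ (K J K⁻¹) = det K • K⁻ᵀ (Δ J) K⁻¹`: conjugating `J` by `K` replaces `Δ J` by a congruent
matrix scaled by `det K`. For `det K < 0` the extra sign of `J_A = -(K J_B K⁻¹)` makes the scale
positive, so `Δ J_A` stays positive semidefinite. The condition `Δ J = -Jᵀ Δ` says exactly that
`Δ J` is symmetric, so it comes for free with positive semidefiniteness. -/

lemma transpose_sympl1 : Sympl1ᵀ = -Sympl1 := by
  ext i j
  fin_cases i <;> fin_cases j <;> simp [Sympl1]

lemma transpose_mul_sympl1_mul_self (K : Matrix (Fin 2) (Fin 2) ℝ) :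
    Kᵀ * Sympl1 * K = K.det • Sympl1 := by
  ext i j
  fin_cases i <;> fin_cases j <;> simp [Sympl1, mul_apply, det_fin_two] <;> ring

lemma sympl1_mul_eq_det_smul {K : Matrix (Fin 2) (Fin 2) ℝ} (hK : IsUnit K.det) :
    Sympl1 * K = K.det • ((K⁻¹)ᵀ * Sympl1) := by
  rw [← Matrix.mul_smul, ← transpose_mul_sympl1_mul_self, transpose_nonsing_inv, mul_assoc,
    Kᵀ.nonsing_inv_mul_cancel_left (Sympl1 * K) (isUnit_det_transpose K hK)]

lemma sympl1_mul_conj {K : Matrix (Fin 2) (Fin 2) ℝ} (hK : IsUnit K.det)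
    (J : Matrix (Fin 2) (Fin 2) ℝ) :
    Sympl1 * (K * J * K⁻¹) = K.det • ((K⁻¹)ᵀ * (Sympl1 * J) * K⁻¹) := by
  rw [← mul_assoc, ← mul_assoc, sympl1_mul_eq_det_smul hK, Matrix.smul_mul, Matrix.smul_mul,
    mul_assoc _ Sympl1]

lemma isComplexStructure1_iff {J : Matrix (Fin 2) (Fin 2) ℝ} :
    IsComplexStructure1 J ↔ J * J = -1 ∧ (Sympl1 * J).PosSemidef := by
  refine ⟨fun ⟨hsq, _, hpsd⟩ ↦ ⟨hsq, hpsd⟩, fun ⟨hsq, hpsd⟩ ↦ ⟨hsq, ?_, hpsd⟩⟩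
  have hsymm : (Sympl1 * J)ᵀ = Sympl1 * J := hpsd.isHermitian
  rw [← hsymm, transpose_mul, transpose_sympl1, mul_neg]

lemma conj_mul_conj {M : Type*} [Monoid M] {a b : M} (h : b * a = 1) (x y : M) :
    a * x * b * (a * y * b) = a * (x * y) * b := by
  simp only [mul_assoc, ← mul_assoc b, h, one_mul]

/-- If `K` is a real 2×2 matrix with `det K < 0` and `J_B` is a
complex structure on `(ℝ², Δ)`, then `J_A = -K J_B K⁻¹` is a complex structure
satisfying the anticommutation relation `K J_B + J_A K = 0`; that is, every
nondegenerate single-mode Gaussian channel with negative `det K` is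
gauge-contravariant. -/
theorem neg_conj_complexStructure_of_det_neg (K J_B : Matrix (Fin 2) (Fin 2) ℝ)
    (hK : K.det < 0) (hJB : IsComplexStructure1 J_B) :
    IsComplexStructure1 (-(K * J_B * K⁻¹)) ∧
    K * J_B + (-(K * J_B * K⁻¹)) * K = 0 := by
  have hKdet : IsUnit K.det := hK.ne.isUnit
  obtain ⟨hsq, -, hpsd⟩ := hJB
  refine ⟨isComplexStructure1_iff.2 ⟨?_, ?_⟩, ?_⟩
  · rw [neg_mul_neg, conj_mul_conj (K.nonsing_inv_mul hKdet), hsq, mul_neg, mul_one, neg_mul,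
      K.mul_nonsing_inv hKdet]
  · rw [mul_neg, sympl1_mul_conj hKdet, ← neg_smul]
    simpa only [conjTranspose_eq_transpose_of_trivial] using (hpsd.conjTranspose_mul_mul_same K⁻¹).smul (neg_nonneg.2 hK.le)
  · rw [neg_mul, ← sub_eq_add_neg, mul_assoc _ K⁻¹, K.nonsing_inv_mul hKdet, mul_one, sub_self]
end
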